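/- Let F be a function on 2×2 complex symmetric matrices satisfying F(γ·M) = det(CM+D)^k F(M) for all γ ∈ Sp(4,ℤ). Let σ₄ = diag(ρ, ρ) with ρ = e^{2πi/3}. If k is not divisible by 6, then F(σ₄) = 0. -/
import Mathlib


open Matrix

/-- The standard symplectic form `J = [[0, I], [-I, 0]]` over ℤ. -/
def symplJ (g : ℕ) : Matrix (Fin g ⊕ Fin g) (Fin g ⊕ Fin g) ℤ :=
  Matrix.fromBlocks 0 1 (-1) 0

noncomputable def rho3 : ℂ := Complex.exp (2 * Real.pi * Complex.I / 3)

/-- The fixed point `σ₄ = diag(ρ, ρ)` with `ρ = e^{2πi/3}`. -/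
noncomputable def sigma4 : Matrix (Fin 2) (Fin 2) ℂ := !![rho3, 0; 0, rho3]

lemma rho3_cube : rho3 ^ 3 = 1 := by
  rw [rho3, ← Complex.exp_nat_mul]
  norm_num
  rw [show (3:ℂ) * (2 * Real.pi * Complex.I / 3) = 2 * Real.pi * Complex.I by ring]
  exact Complex.exp_two_pi_mul_I

lemma rho3_ne_one : rho3 ≠ 1 := by
  intro h
  rw [rho3, Complex.exp_eq_one_iff] at h
  obtain ⟨n, hn⟩ := h
  have hπ : (Real.pi : ℂ) ≠ 0 := Complex.ofReal_ne_zero.mpr Real.pi_ne_zero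
  have h2 : ((1 : ℂ) - 3 * n) * (Real.pi * Complex.I) = 0 := by
    linear_combination (3/2 : ℂ) * hn
  rcases mul_eq_zero.mp h2 with h3 | h3
  · have : (1 : ℤ) = 3 * n := by
      have : (1 : ℂ) = 3 * n := by linear_combination h3
      exact_mod_cast this
    omega
  · exact (mul_ne_zero hπ Complex.I_ne_zero) h3

lemma rho3_rel : rho3 ^ 2 + rho3 + 1 = 0 := by
  have h : (rho3 - 1) * (rho3 ^ 2 + rho3 + 1) = 0 := by
    linear_combination rho3_cube
  rcases mul_eq_zero.mp h with h1 | h2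
  · exact absurd (sub_eq_zero.mp h1) rho3_ne_one
  · exact h2

/-- A weight-`k` Siegel modular form (trivial multiplier) vanishes at `σ₄ = diag(ρ,ρ)` unless `6 ∣ k`. -/
theorem stmt8 (k : ℤ) (F : Matrix (Fin 2) (Fin 2) ℂ → ℂ)
    (hF : ∀ A B C D : Matrix (Fin 2) (Fin 2) ℤ,
      Matrix.fromBlocks A B C D * symplJ 2 * (Matrix.fromBlocks A B C D)ᵀ = symplJ 2 →
      ∀ M : Matrix (Fin 2) (Fin 2) ℂ, Mᵀ = M →
      IsUnit (C.map (Int.cast : ℤ → ℂ) * M + D.map (Int.cast : ℤ → ℂ)) →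
      F ((A.map (Int.cast : ℤ → ℂ) * M + B.map (Int.cast : ℤ → ℂ)) *
          (C.map (Int.cast : ℤ → ℂ) * M + D.map (Int.cast : ℤ → ℂ))⁻¹) =
        ((C.map (Int.cast : ℤ → ℂ) * M + D.map (Int.cast : ℤ → ℂ)).det) ^ k * F M)
    (hk : ¬ ((6:ℤ) ∣ k)) :
    F sigma4 = 0 := by
  have hrel := rho3_rel
  have hsym : sigma4ᵀ = sigma4 := by
    ext i j; fin_cases i <;> fin_cases j <;> simp [sigma4]
  have hAmap : (0 : Matrix (Fin 2) (Fin 2) ℤ).map (Int.cast : ℤ → ℂ) = 0 := by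
    ext i j; simp
  have hBmap : (!![1,0;0,-1] : Matrix (Fin 2) (Fin 2) ℤ).map (Int.cast : ℤ → ℂ)
      = !![1,0;0,-1] := by
    ext i j; fin_cases i <;> fin_cases j <;> simp
  have hCmap : (!![-1,0;0,1] : Matrix (Fin 2) (Fin 2) ℤ).map (Int.cast : ℤ → ℂ)
      = !![-1,0;0,1] := by
    ext i j; fin_cases i <;> fin_cases j <;> simp
  have hCD : (!![-1,0;0,1] : Matrix (Fin 2) (Fin 2) ℂ) * sigma4 + !![-1,0;0,1]
      = !![-rho3 - 1, 0; 0, rho3 + 1] := by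
    rw [sigma4]
    ext i j
    fin_cases i <;> fin_cases j <;>
      simp [Matrix.mul_apply, Fin.sum_univ_two] <;> ring
  have hAB : (0 : Matrix (Fin 2) (Fin 2) ℂ) * sigma4 + !![1,0;0,-1]
      = !![(1:ℂ),0;0,-1] := by simp
  have hdet : (!![-rho3 - 1, 0; 0, rho3 + 1] : Matrix (Fin 2) (Fin 2) ℂ).det = -rho3 := by
    rw [Matrix.det_fin_two_of]
    linear_combination -hrel
  have hrho_ne : rho3 ≠ 0 := by rw [rho3]; exact Complex.exp_ne_zero _
  have hunit0 : IsUnit ((!![-rho3 - 1, 0; 0, rho3 + 1] : Matrix (Fin 2) (Fin 2) ℂ)) := by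
    rw [Matrix.isUnit_iff_isUnit_det, hdet, isUnit_iff_ne_zero]
    simpa using hrho_ne
  have hfix : (!![(1:ℂ),0;0,-1]) * (!![-rho3 - 1, 0; 0, rho3 + 1] : Matrix (Fin 2) (Fin 2) ℂ)⁻¹
      = sigma4 := by
    have key : sigma4 * (!![-rho3 - 1, 0; 0, rho3 + 1] : Matrix (Fin 2) (Fin 2) ℂ)
        = !![(1:ℂ),0;0,-1] := by
      rw [sigma4]
      ext i j
      fin_cases i <;> fin_cases j <;>
        simp [Matrix.mul_apply, Fin.sum_univ_two]
      · linear_combination -hrel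
      · linear_combination hrel
    rw [← key,
      Matrix.mul_nonsing_inv_cancel_right _ _ ((Matrix.isUnit_iff_isUnit_det _).mp hunit0)]
  have hsympl : Matrix.fromBlocks (0 : Matrix (Fin 2) (Fin 2) ℤ) !![1,0;0,-1] !![-1,0;0,1] !![-1,0;0,1]
      * symplJ 2 *
      (Matrix.fromBlocks (0 : Matrix (Fin 2) (Fin 2) ℤ) !![1,0;0,-1] !![-1,0;0,1] !![-1,0;0,1])ᵀ
      = symplJ 2 := by decide
  have heq := hF 0 !![1,0;0,-1] !![-1,0;0,1] !![-1,0;0,1] hsympl sigma4 hsym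
  rw [hAmap, hBmap, hCmap, hCD, hAB] at heq
  have heq2 := heq hunit0
  rw [hfix, hdet] at heq2
  -- `heq2 : F sigma4 = (-rho3)^k * F sigma4`; show `(-rho3)^k ≠ 1`
  have hne1 : (-rho3) ^ k ≠ 1 := by
    have hexp : -rho3 = Complex.exp (5 * Real.pi * Complex.I / 3) := by
      rw [show (5:ℂ) * Real.pi * Complex.I / 3
            = 2 * Real.pi * Complex.I / 3 + Real.pi * Complex.I by ring,
        Complex.exp_add, Complex.exp_pi_mul_I, rho3]
      ring
    intro h1
    rw [hexp, ← Complex.exp_int_mul, Complex.exp_eq_one_iff] at h1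
    obtain ⟨n, hn⟩ := h1
    have hπ : (Real.pi : ℂ) ≠ 0 := Complex.ofReal_ne_zero.mpr Real.pi_ne_zero
    have h2 : ((5 * k : ℂ) - 6 * n) * (Real.pi * Complex.I) = 0 := by
      linear_combination (3 : ℂ) * hn
    rcases mul_eq_zero.mp h2 with h3 | h3
    · have h4 : (5 * k : ℤ) = 6 * n := by
        have : (5 * k : ℂ) = 6 * n := by linear_combination h3
        exact_mod_cast this
      omega
    · exact (mul_ne_zero hπ Complex.I_ne_zero) h3
  have hmul : ((-rho3) ^ k - 1) * F sigma4 = 0 := by linear_combination -heq2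
  rcases mul_eq_zero.mp hmul with h | h
  · exact absurd (by linear_combination h) hne1
  · exact h
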